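/- Let n ≥ 5 be odd, ϑ := n·cos(π/n)/(1 + cos(π/n)), a := 1/ϑ and b := (n − ϑ)/(2ϑ²). Let u ∈ ℝ^n be the vector with u_0 = a, u_1 = u_{n−1} = b and all other entries 0. Then the n×n circulant matrix circ(u) (with (j,k)-entry u_{(k−j) mod n}) has rank exactly n − 2. -/

import Mathlib

/-!
A kernel vector of `circ(u)` is a solution of the cyclic recurrence
`a x_j + b (x_{j+1} + x_{j-1}) = 0`. Since `b ≠ 0`, a solution is determined by `x_0` and `x_1`,
so the kernel has dimension at most `2`. Conversely, for `φ = π - π/n` the value of `ϑ` gives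
exactly `a + 2 b cos φ = 0`, and `nφ = (n - 1)π ∈ 2πℤ` because `n` is odd, so sampling
`cos (φ t)` and `sin (φ t)` at `t = 0, …, n - 1` gives two independent kernel vectors.
Rank–nullity then gives rank `n - 2`.
-/

/-- The `n × n` circulant matrix of a vector `u ∈ ℝ^n`: its `(j, k)` entry is
`u ((k - j) mod n)` (subtraction in `Fin n` is modular). -/
def circMat (n : ℕ) (u : Fin n → ℝ) : Matrix (Fin n) (Fin n) ℝ :=
  fun j k => u (k - j)

def symmTridiagRow (n : ℕ) (a b : ℝ) : Fin n → ℝ :=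
  fun i => if i.val = 0 then a else if i.val = 1 ∨ i.val = n - 1 then b else 0

section

open scoped Fin.CommRing
open Function Real Matrix

theorem eq_zero_of_three_term_recurrence {R : Type*} [Ring R] [NoZeroDivisors R] {n : ℕ}
    [NeZero n] {a b : R} (hb : b ≠ 0) {x : Fin n → R}
    (hx : ∀ j, a * x j + b * (x (j + 1) + x (j - 1)) = 0) (h0 : x 0 = 0) (h1 : x 1 = 0) :
    x = 0 := by
  have hpair : ∀ p : ℕ, x p = 0 ∧ x (p + 1) = 0 := by
    intro p
    induction p with
    | zero => simpa using ⟨h0, h1⟩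
    | succ p ih =>
      refine ⟨by exact_mod_cast ih.2, ?_⟩
      have h := hx (p + 1)
      rw [add_sub_cancel_right, ih.1, ih.2] at h
      push_cast
      simpa [hb] using h
  funext j
  simpa using (hpair j).1

theorem Function.Periodic.map_val_intCast {f : ℝ → ℝ} {n : ℕ} [NeZero n] (hf : Periodic f n)
    (m : ℤ) : f ((m : Fin n) : ℕ) = f m := by
  have hpos : (0 : ℤ) < n := by exact_mod_cast Nat.pos_of_neZero n
  rw [Fin.val_intCast, ← Int.cast_natCast, Int.toNat_of_nonneg (Int.emod_nonneg m hpos.ne'),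
    Int.emod_def, Int.cast_sub, Int.cast_mul, mul_comm, Int.cast_natCast]
  exact hf.sub_int_mul_eq _

theorem Function.Periodic.map_val_add_one_add_map_val_sub_one {f : ℝ → ℝ} {n : ℕ} [NeZero n]
    (hf : Periodic f n) {c : ℝ} (hrec : ∀ t, f (t + 1) + f (t - 1) = 2 * c * f t) (j : Fin n) :
    f ((j + 1 : Fin n) : ℕ) + f ((j - 1 : Fin n) : ℕ) = 2 * c * f (j : ℕ) := by
  have hsucc : j + 1 = (((j : ℕ) + 1 : ℤ) : Fin n) := by push_cast; simp
  have hpred : j - 1 = (((j : ℕ) - 1 : ℤ) : Fin n) := by push_cast; simp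
  rw [hsucc, hpred, hf.map_val_intCast, hf.map_val_intCast]
  push_cast
  exact hrec _

theorem periodic_cos_mul {φ : ℝ} {n : ℕ} {k : ℤ} (hφ : φ * n = k * (2 * π)) :
    Periodic (fun t => cos (φ * t)) n := fun t => by
  simp only [mul_add, hφ, cos_add_int_mul_two_pi]

theorem periodic_sin_mul {φ : ℝ} {n : ℕ} {k : ℤ} (hφ : φ * n = k * (2 * π)) :
    Periodic (fun t => sin (φ * t)) n := fun t => by
  simp only [mul_add, hφ, sin_add_int_mul_two_pi]

theorem cos_mul_add_one_add_cos_mul_sub_one (φ t : ℝ) :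
    cos (φ * (t + 1)) + cos (φ * (t - 1)) = 2 * cos φ * cos (φ * t) := by
  rw [cos_add_cos]; ring_nf

theorem sin_mul_add_one_add_sin_mul_sub_one (φ t : ℝ) :
    sin (φ * (t + 1)) + sin (φ * (t - 1)) = 2 * cos φ * sin (φ * t) := by
  rw [sin_add_sin]; ring_nf

theorem circMat_mulVec_apply {n : ℕ} [NeZero n] (u x : Fin n → ℝ) (j : Fin n) :
    (circMat n u *ᵥ x) j = ∑ i, u i * x (j + i) :=
  Fintype.sum_equiv (Equiv.subRight j) _ _ fun k => by simp [circMat, mul_comm]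

variable {n : ℕ} [NeZero n] {a b : ℝ}

theorem symmTridiagRow_eq (hn : 3 ≤ n) :
    symmTridiagRow n a b = Pi.single 0 a + Pi.single 1 b + Pi.single (-1) b := by
  obtain ⟨m, rfl⟩ : ∃ m, n = m + 3 := ⟨n - 3, by omega⟩
  funext i
  simp only [symmTridiagRow, Pi.add_apply, Pi.single_apply, Fin.ext_iff, Fin.val_zero,
    Fin.val_one, Fin.coe_neg_one]
  split_ifs <;> first | omega | simp

theorem circMat_symmTridiagRow_mulVec_apply (hn : 3 ≤ n) (x : Fin n → ℝ) (j : Fin n) :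
    (circMat n (symmTridiagRow n a b) *ᵥ x) j = a * x j + b * (x (j + 1) + x (j - 1)) := by
  simp only [circMat_mulVec_apply, symmTridiagRow_eq hn, Pi.add_apply, add_mul,
    Finset.sum_add_distrib, Pi.single_apply, ite_mul, zero_mul, Finset.sum_ite_eq',
    Finset.mem_univ, if_true, add_zero, sub_eq_add_neg]
  ring

theorem mem_ker_circMat_symmTridiagRow_iff (hn : 3 ≤ n) (x : Fin n → ℝ) :
    x ∈ LinearMap.ker (circMat n (symmTridiagRow n a b)).mulVecLin ↔
      ∀ j, a * x j + b * (x (j + 1) + x (j - 1)) = 0 := by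
  simp only [LinearMap.mem_ker, mulVecLin_apply, funext_iff, Pi.zero_apply,
    circMat_symmTridiagRow_mulVec_apply hn]

theorem finrank_ker_circMat_symmTridiagRow_le_two (hn : 3 ≤ n) (hb : b ≠ 0) :
    Module.finrank ℝ (LinearMap.ker (circMat n (symmTridiagRow n a b)).mulVecLin) ≤ 2 := by
  set K := LinearMap.ker (circMat n (symmTridiagRow n a b)).mulVecLin
  let initialValues : K →ₗ[ℝ] Fin 2 → ℝ :=
    (LinearMap.pi ![LinearMap.proj 0, LinearMap.proj 1]).comp K.subtype
  have hinj : Injective initialValues := by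
    refine (injective_iff_map_eq_zero _).2 fun x hx => Subtype.ext ?_
    exact eq_zero_of_three_term_recurrence hb
      ((mem_ker_circMat_symmTridiagRow_iff hn x).1 x.2) (congrFun hx 0) (congrFun hx 1)
  simpa using LinearMap.finrank_le_finrank_of_injective hinj

theorem two_le_finrank_ker_circMat_symmTridiagRow (hn : 3 ≤ n) {φ : ℝ} {k : ℤ}
    (hφ : φ * n = k * (2 * π)) (hab : a + 2 * b * cos φ = 0) (hsin : sin φ ≠ 0) :
    2 ≤ Module.finrank ℝ (LinearMap.ker (circMat n (symmTridiagRow n a b)).mulVecLin) := by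
  set v : Fin n → ℝ := fun k => cos (φ * (k : ℕ))
  set w : Fin n → ℝ := fun k => sin (φ * (k : ℕ))
  have hv : v ∈ LinearMap.ker (circMat n (symmTridiagRow n a b)).mulVecLin :=
    (mem_ker_circMat_symmTridiagRow_iff hn v).2 fun j => by
      linear_combination b * (periodic_cos_mul hφ).map_val_add_one_add_map_val_sub_one
        (cos_mul_add_one_add_cos_mul_sub_one φ) j + v j * hab
  have hw : w ∈ LinearMap.ker (circMat n (symmTridiagRow n a b)).mulVecLin :=
    (mem_ker_circMat_symmTridiagRow_iff hn w).2 fun j => by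
      linear_combination b * (periodic_sin_mul hφ).map_val_add_one_add_map_val_sub_one
        (sin_mul_add_one_add_sin_mul_sub_one φ) j + w j * hab
  have hindep : LinearIndependent ℝ ![v, w] := by
    rw [LinearIndependent.pair_iff]
    intro s t hst
    have hs : s = 0 := by simpa [v, w] using congrFun hst 0
    have h1 : 1 % n = 1 := Nat.mod_eq_of_lt (by omega)
    have ht : t * sin φ = 0 := by simpa [v, w, hs, h1] using congrFun hst 1
    exact ⟨hs, (mul_eq_zero.1 ht).resolve_right hsin⟩
  calc 2 = Module.finrank ℝ (Submodule.span ℝ (Set.range ![v, w])) := by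
        rw [finrank_span_eq_card hindep]; simp
    _ ≤ _ := Submodule.finrank_mono <| Submodule.span_le.2 <| Set.range_subset_iff.2 <| by
        intro i; fin_cases i
        exacts [hv, hw]

theorem rank_circMat_symmTridiagRow (hn : 3 ≤ n) (hb : b ≠ 0) {φ : ℝ} {k : ℤ}
    (hφ : φ * n = k * (2 * π)) (hab : a + 2 * b * cos φ = 0) (hsin : sin φ ≠ 0) :
    (circMat n (symmTridiagRow n a b)).rank = n - 2 := by
  have hker := le_antisymm (finrank_ker_circMat_symmTridiagRow_le_two hn hb)
    (two_le_finrank_ker_circMat_symmTridiagRow hn hφ hab hsin)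
  have hsum :=
    LinearMap.finrank_range_add_finrank_ker (circMat n (symmTridiagRow n a b)).mulVecLin
  rw [hker, Module.finrank_fin_fun] at hsum
  rw [Matrix.rank]
  omega

end

theorem circulant_rank_eq (n : ℕ) (hodd : Odd n) (hn : 5 ≤ n)
    (θ a b : ℝ)
    (hθ : θ = n * Real.cos (Real.pi / n) / (1 + Real.cos (Real.pi / n)))
    (ha : a = 1 / θ)
    (hb : b = (n - θ) / (2 * θ ^ 2))
    (u : Fin n → ℝ)
    (hu : ∀ i : Fin n, u i =
      if i.val = 0 then a else if i.val = 1 ∨ i.val = n - 1 then b else 0) :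
    (circMat n u).rank = n - 2 := by
  have : NeZero n := ⟨by omega⟩
  obtain rfl : u = symmTridiagRow n a b := funext hu
  obtain ⟨m, hm⟩ := hodd
  have hnR : (5 : ℝ) ≤ n := by exact_mod_cast hn
  have hπn : 0 < Real.pi / n := by positivity
  have hcos : 0 < Real.cos (Real.pi / n) := Real.cos_pos_of_mem_Ioo
    ⟨by linarith [Real.pi_pos], div_lt_div_of_pos_left Real.pi_pos two_pos (by linarith)⟩
  have hsin : 0 < Real.sin (Real.pi / n) :=
    Real.sin_pos_of_pos_of_lt_pi hπn (div_lt_self Real.pi_pos (by linarith))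
  have hθpos : 0 < θ := hθ ▸ by positivity
  have hbpos : 0 < b := by
    have hnθ : (n - θ) * (1 + Real.cos (Real.pi / n)) = n := by rw [hθ]; field_simp; ring
    have hprod : 0 < (n - θ) * (1 + Real.cos (Real.pi / n)) := by linarith
    rw [hb]; exact div_pos (pos_of_mul_pos_left hprod (by linarith)) (by positivity)
  refine rank_circMat_symmTridiagRow (by omega) hbpos.ne' (φ := Real.pi - Real.pi / n) (k := m)
    ?_ ?_ ?_
  · rw [hm]; push_cast; field_simp; ring
  · rw [Real.cos_pi_sub, ha, hb, hθ]; field_simp; ring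
  · rw [Real.sin_pi_sub]; exact hsin.ne'
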